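/- Let m ≥ 3 and let A = (a₁,…,a_m) and A' = (a'₁,…,a'_m) be two distinct normalized nonincreasing scoring vectors over the naturals (i.e., a_m = a'_m = 0 and the gcd of the nonzero entries of each vector, if any, is 1). Then there exists a finite multiset of votes over m candidates such that the winner set under A differs from the winner set under A'. -/

import Mathlib

/-- Score of candidate c under natural-number scoring vector α for the multiset of votes V. -/
def score {m : ℕ} (α : Fin m → ℕ) (V : Multiset (Equiv.Perm (Fin m))) (c : Fin m) : ℕ :=
  (V.map fun v => α (v.symm c)).sum

/-- Winners: candidates with maximal total score. -/
def winners {m : ℕ} (α : Fin m → ℕ) (V : Multiset (Equiv.Perm (Fin m))) : Set (Fin m) :=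
  {c | ∀ d, score α V d ≤ score α V c}

/-!
Fix a candidate `c` at position `j` and let the other candidates run cyclically through the
remaining positions: in this block of `m - 1` votes, `c` beats each other candidate by
`m α j - ∑ α`, while the others tie. Mixing such blocks for candidate `0` (and using
`α (last) = 0`), the margin of `0` over everyone else becomes the linear form
`m k α j - a ∑ α`, which vanishes for `A` but not for `A'` unless `A` and `A'` are proportional;
distinct primitive vectors are not. So all candidates win under `A` but not under `A'`. If one
vector is zero, a single vote already separates them.
-/

open Equiv Finset

lemma sum_pos_of_gcd_eq_one {ι : Type*} [Fintype ι] {A : ι → ℕ} (hA : univ.gcd A = 1) :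
    0 < ∑ i, A i := by
  by_contra! h
  have : univ.gcd A = 0 :=
    gcd_eq_zero_iff.mpr fun i hi => sum_eq_zero_iff.mp (Nat.le_zero.mp h) i hi
  omega

lemma exists_sum_mul_ne_of_gcd_eq_one {ι : Type*} [Fintype ι] {A A' : ι → ℕ}
    (hA : univ.gcd A = 1) (hA' : univ.gcd A' = 1) (hne : A ≠ A') :
    ∃ j, (∑ i, A i) * A' j ≠ (∑ i, A' i) * A j := by
  by_contra! h
  have hsum : ∑ i, A i = ∑ i, A' i := by
    simpa [Finset.gcd_mul_left, hA, hA'] using gcd_congr rfl fun i (_ : i ∈ univ) => h i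
  refine hne (funext fun i => (Nat.eq_of_mul_eq_mul_left (sum_pos_of_gcd_eq_one hA) ?_).symm)
  rw [h i, hsum]

section Score

variable {m : ℕ} (α : Fin m → ℕ)

lemma score_add (V W : Multiset (Perm (Fin m))) (c : Fin m) :
    score α (V + W) c = score α V c + score α W c := by
  simp [score]

lemma score_singleton_one (c : Fin m) : score α {1} c = α c := rfl

lemma winners_eq_univ_of_forall_score_eq {V : Multiset (Perm (Fin m))} {c : Fin m}
    (h : ∀ e, score α V e = score α V c) : winners α V = Set.univ :=
  Set.eq_univ_of_forall fun e d => by rw [h d, h e]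

lemma winners_ne_univ_of_score_ne {V : Multiset (Perm (Fin m))} {c e : Fin m}
    (h : score α V c ≠ score α V e) : winners α V ≠ Set.univ := by
  intro hV
  have hc : c ∈ winners α V := hV ▸ Set.mem_univ c
  have he : e ∈ winners α V := hV ▸ Set.mem_univ e
  exact h (le_antisymm (he c) (hc e))

def scoreGap (c e : Fin m) : Multiset (Perm (Fin m)) →+ ℤ where
  toFun V := score α V c - score α V e
  map_zero' := by simp [score]
  map_add' V W := by simp only [score_add]; push_cast; ring

lemma scoreGap_apply (c e : Fin m) (V : Multiset (Perm (Fin m))) :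
    scoreGap α c e V = score α V c - score α V e := rfl

end Score

lemma winners_eq_univ_of_forall_eq_zero {m : ℕ} {α : Fin m → ℕ} (hα : ∀ i, α i = 0)
    (V : Multiset (Perm (Fin m))) : winners α V = Set.univ :=
  Set.eq_univ_of_forall fun c d => by simp [score, hα]

lemma winners_singleton_one_ne_univ {m : ℕ} {α : Fin m → ℕ} (hα : univ.gcd α = 1)
    {l : Fin m} (hl : α l = 0) : winners α {1} ≠ Set.univ := by
  obtain ⟨i, -, hi⟩ := exists_ne_zero_of_sum_ne_zero (sum_pos_of_gcd_eq_one hα).ne'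
  exact winners_ne_univ_of_score_ne α (c := i) (e := l)
    (by rwa [score_singleton_one, score_singleton_one, hl])

section Block

variable {n : ℕ} [NeZero n]

/-- Maps candidates to positions, i.e. it is the inverse of a vote: `c` goes to position `j`,
the other candidates cycle through the other positions with shift `t`. -/
def shiftedRanking (c j : Fin (n + 1)) (t : Fin n) : Perm (Fin (n + 1)) :=
  swap 0 j * Perm.decomposeFin.symm (0, Equiv.addRight t) * swap 0 c

def block (c j : Fin (n + 1)) : Multiset (Perm (Fin (n + 1))) :=
  (univ : Finset (Fin n)).val.map fun t => (shiftedRanking c j t).symm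

lemma score_block (α : Fin (n + 1) → ℕ) (c j e : Fin (n + 1)) :
    score α (block c j) e = ∑ t, α (shiftedRanking c j t e) := by
  simp only [score, block, Multiset.map_map, Function.comp_def, symm_symm]
  rfl

lemma score_block_self (α : Fin (n + 1) → ℕ) (c j : Fin (n + 1)) :
    score α (block c j) c = n * α j := by
  simp [score_block, shiftedRanking]

lemma score_block_add_of_ne (α : Fin (n + 1) → ℕ) {c e : Fin (n + 1)} (j : Fin (n + 1))
    (he : e ≠ c) : score α (block c j) e + α j = ∑ i, α i := by
  obtain ⟨f, hf⟩ : ∃ f : Fin n, swap 0 c e = f.succ :=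
    Fin.eq_succ_of_ne_zero (by simpa [swap_apply_eq_iff] using he)
  have : ∀ t, shiftedRanking c j t e = swap 0 j (f + t).succ := by
    intro t; simp [shiftedRanking, Perm.mul_apply, hf]
  calc score α (block c j) e + α j
      = ∑ s : Fin n, α (swap 0 j s.succ) + α (swap 0 j 0) := by
        simp only [score_block, swap_apply_left, this]
        congr 1
        exact Fintype.sum_equiv (Equiv.addLeft f) _ _ fun t => rfl
    _ = ∑ i, α (swap 0 j i) := by rw [Fin.sum_univ_succ, add_comm]
    _ = ∑ i, α i := Equiv.sum_comp (swap 0 j) α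

end Block

section Profile

variable {n : ℕ} [NeZero n]

lemma scoreGap_block (α : Fin (n + 1) → ℕ) {c e : Fin (n + 1)} (j : Fin (n + 1))
    (he : e ≠ c) :
    scoreGap α c e (block c j) = (n + 1) * α j - ∑ i, α i := by
  have h := score_block_add_of_ne α j he
  rw [scoreGap_apply, score_block_self]
  zify at h
  push_cast
  linear_combination -h

def gapProfile (j : Fin (n + 1)) (k a : ℕ) : Multiset (Perm (Fin (n + 1))) :=
  k • block 0 j + a • block 0 (Fin.last n) + k • ∑ i ∈ univ.erase (Fin.last n), block 0 i

lemma scoreGap_gapProfile {α : Fin (n + 1) → ℕ} (hα : α (Fin.last n) = 0) {e : Fin (n + 1)}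
    (he : e ≠ 0) (j : Fin (n + 1)) (k a : ℕ) :
    scoreGap α 0 e (gapProfile j k a) = (n + 1) * k * α j - a * ∑ i, α i := by
  have hsum : ∑ i ∈ univ.erase (Fin.last n), (α i : ℤ) = ∑ i, (α i : ℤ) :=
    sum_erase _ (by simp [hα])
  simp only [gapProfile, map_add, map_nsmul, map_sum, scoreGap_block α _ he,
    sum_sub_distrib, ← mul_sum, hsum, sum_const, card_erase_of_mem (mem_univ _), card_univ,
    Fintype.card_fin, hα]
  push_cast
  ring

/-- `k = ∑ A` and `a = (n + 1) A j` make the margin `(n + 1) k α j - a ∑ α` vanish at `A`. -/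
lemma exists_winners_eq_univ_ne_univ {A A' : Fin (n + 1) → ℕ} (hA : A (Fin.last n) = 0)
    (hA' : A' (Fin.last n) = 0) {j : Fin (n + 1)}
    (hj : (∑ i, A i) * A' j ≠ (∑ i, A' i) * A j) :
    ∃ V, winners A V = Set.univ ∧ winners A' V ≠ Set.univ := by
  refine ⟨gapProfile j (∑ i, A i) ((n + 1) * A j),
    winners_eq_univ_of_forall_score_eq A (c := 0) fun e => ?_,
    winners_ne_univ_of_score_ne A' (c := 0) (e := Fin.last n) fun h => hj ?_⟩
  · rcases eq_or_ne e 0 with rfl | he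
    · rfl
    · have h := scoreGap_gapProfile hA he j (∑ i, A i) ((n + 1) * A j)
      rw [scoreGap_apply] at h
      push_cast at h
      linarith
  · have h' := scoreGap_gapProfile hA' Fin.last_pos'.ne' j (∑ i, A i) ((n + 1) * A j)
    rw [scoreGap_apply, h] at h'
    push_cast at h'
    have key : ((n : ℤ) + 1) * ((∑ i, A i) * A' j - (∑ i, A' i) * A j) = 0 := by
      push_cast
      linear_combination -h'
    exact_mod_cast sub_eq_zero.mp ((mul_eq_zero.mp key).resolve_left (by positivity))

end Profile

/-- Two distinct normalized nonincreasing natural scoring vectors (last entry 0, gcd of the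
nonzero entries 1, or all-zero) differ in winner set on some finite multiset of votes. -/
theorem stmt_2 (m : ℕ) (hm : 3 ≤ m) (A A' : Fin m → ℕ)
    (hA0 : A ⟨m - 1, by omega⟩ = 0) (hA'0 : A' ⟨m - 1, by omega⟩ = 0)
    (hAgcd : Finset.univ.gcd A = 1 ∨ ∀ i, A i = 0)
    (hA'gcd : Finset.univ.gcd A' = 1 ∨ ∀ i, A' i = 0)
    (hne : A ≠ A') :
    ∃ V : Multiset (Equiv.Perm (Fin m)), winners A V ≠ winners A' V := by
  obtain ⟨n, rfl⟩ : ∃ n, m = n + 1 := ⟨m - 1, by omega⟩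
  have : NeZero n := ⟨by omega⟩
  replace hA0 : A (Fin.last n) = 0 := hA0
  replace hA'0 : A' (Fin.last n) = 0 := hA'0
  rcases hAgcd with hA | hA <;> rcases hA'gcd with hA' | hA'
  · obtain ⟨j, hj⟩ := exists_sum_mul_ne_of_gcd_eq_one hA hA' hne
    obtain ⟨V, hAV, hA'V⟩ := exists_winners_eq_univ_ne_univ hA0 hA'0 hj
    exact ⟨V, hAV ▸ hA'V.symm⟩
  · refine ⟨{1}, ?_⟩
    rw [winners_eq_univ_of_forall_eq_zero hA']
    exact winners_singleton_one_ne_univ hA hA0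
  · refine ⟨{1}, ?_⟩
    rw [winners_eq_univ_of_forall_eq_zero hA]
    exact (winners_singleton_one_ne_univ hA' hA'0).symm
  · exact absurd (funext fun i => (hA i).trans (hA' i).symm) hne
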